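/- arXiv:1908.08406 — 4 statements merged into one kernel-verified Lean document; each statement's English description precedes it below -/
import Mathlib

section
/- Grounded semantics is SCC-rich: for every AF F = ⟨Ar, att⟩ with exactly one strongly connected component and every argument a ∈ Ar, there exists a grounded extension E of F such that E does not attack a. -/
variable {A : Type*}

def conflictFree (att : A → A → Prop) (S : Set A) : Prop :=
  ∀ b ∈ S, ∀ c ∈ S, ¬ att b c

def attacks (att : A → A → Prop) (S : Set A) (a : A) : Prop :=
  ∃ b ∈ S, att b a

/-- `S` defends `a`: every attacker of `a` is attacked by `S`. -/
def defends (att : A → A → Prop) (S : Set A) (a : A) : Prop :=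
  ∀ b, att b a → attacks att S b

/-- `S` is a complete extension. -/
def completeExt (att : A → A → Prop) (S : Set A) : Prop :=
  conflictFree att S ∧ (∀ a ∈ S, defends att S a) ∧ (∀ a, defends att S a → a ∈ S)

/-- `S` is a grounded extension: a ⊆-minimal complete extension. -/
def groundedExt (att : A → A → Prop) (S : Set A) : Prop :=
  completeExt att S ∧ ∀ T, completeExt att T → T ⊆ S → T = S

/-- The AF has exactly one strongly connected component: any two arguments are
related by mutual att-reachability (or equal). -/
def oneSCC (att : A → A → Prop) : Prop :=
  ∀ x y : A, x = y ∨ (Relation.TransGen att x y ∧ Relation.TransGen att y x)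

/-!
If every argument is attacked, the empty set is complete, hence grounded, and attacks nothing.
Otherwise an unattacked argument in a single SCC leaves no attacks at all, so the whole set of
arguments is the grounded extension and again attacks nothing.
-/

theorem defends_empty_iff (att : A → A → Prop) (a : A) :
    defends att ∅ a ↔ ∀ b, ¬ att b a := by
  simp [defends, attacks]

theorem not_attacks_empty (att : A → A → Prop) (a : A) : ¬ attacks att ∅ a := by
  simp [attacks]

theorem completeExt.mem_of_unattacked {att : A → A → Prop} {S : Set A} (hS : completeExt att S)
    {a : A} (ha : ∀ b, ¬ att b a) : a ∈ S :=
  hS.2.2 a fun b hb => (ha b hb).elim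

theorem groundedExt_empty (att : A → A → Prop) (hatt : ∀ a, ∃ b, att b a) :
    groundedExt att ∅ := by
  refine ⟨⟨fun b hb => hb.elim, fun a ha => ha.elim, fun a ha => ?_⟩,
    fun T _ hT => Set.subset_empty_iff.mp hT⟩
  obtain ⟨b, hb⟩ := hatt a
  exact ((defends_empty_iff att a).mp ha b hb).elim

theorem groundedExt_univ (att : A → A → Prop) (hatt : ∀ a b, ¬ att a b) :
    groundedExt att Set.univ :=
  ⟨⟨fun b _ c _ => hatt b c, fun a _ b hb => (hatt b a hb).elim, fun a _ => Set.mem_univ a⟩,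
    fun _ hT _ => Set.eq_univ_of_forall fun a => hT.mem_of_unattacked (hatt · a)⟩

/-- Any argument other than `x` reaches `x`, which would give `x` an attacker; so `x` is the
only argument. -/
theorem oneSCC.not_att_of_unattacked {att : A → A → Prop} (h : oneSCC att) {x : A}
    (hx : ∀ b, ¬ att b x) (u v : A) : ¬ att u v := by
  intro huv
  rcases h v x with rfl | ⟨hvx, -⟩
  · exact hx u huv
  · obtain ⟨c, -, hcx⟩ := Relation.TransGen.tail'_iff.mp hvx
    exact hx c hcx

theorem grounded_SCCRich_general (att : A → A → Prop) (h1 : oneSCC att) (a : A) :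
    ∃ E, groundedExt att E ∧ ¬ attacks att E a := by
  by_cases hatt : ∀ x, ∃ b, att b x
  · exact ⟨∅, groundedExt_empty att hatt, not_attacks_empty att a⟩
  · push Not at hatt
    obtain ⟨x, hx⟩ := hatt
    have hnone := h1.not_att_of_unattacked hx
    exact ⟨Set.univ, groundedExt_univ att hnone, fun ⟨b, _, hb⟩ => hnone b a hb⟩

theorem grounded_SCCRich [Fintype A] (att : A → A → Prop) (h1 : oneSCC att) (a : A) :
    ∃ E, groundedExt att E ∧ ¬ attacks att E a :=
  grounded_SCCRich_general att h1 a
end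

section
/- Complete semantics is SCC-rich: for every AF F = ⟨Ar, att⟩ with exactly one strongly connected component and every argument a ∈ Ar, there exists a complete extension E of F such that E does not attack a. -/
/-!
If the framework has no attacks at all, the set of all arguments is complete and attacks
nothing. Otherwise, since every argument lies in the single SCC, some path of attacks ends at
each argument, so every argument has an attacker; then the empty set defends nothing and is
complete, and it attacks nothing either.
-/

variable {A : Type*}

theorem completeExt_univ_of_forall_not_att {att : A → A → Prop} (h : ∀ b c, ¬ att b c) :
    completeExt att Set.univ :=
  ⟨fun b _ c _ => h b c, fun b _ c hcb => (h c b hcb).elim, fun b _ => Set.mem_univ b⟩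

theorem completeExt_empty_of_forall_exists_att {att : A → A → Prop}
    (h : ∀ b, ∃ c, att c b) : completeExt att ∅ := by
  refine ⟨fun b hb => hb.elim, fun b hb => hb.elim, fun b hb => ?_⟩
  obtain ⟨c, hcb⟩ := h b
  obtain ⟨d, hd, -⟩ := hb c hcb
  exact hd.elim

theorem oneSCC.exists_att_of_att {att : A → A → Prop} (hF : oneSCC att) {x y : A}
    (hxy : att x y) (z : A) : ∃ w, att w z := by
  rcases hF y z with rfl | ⟨hyz, -⟩
  · exact ⟨x, hxy⟩
  · obtain ⟨w, -, hwz⟩ := Relation.TransGen.tail'_iff.mp hyz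
    exact ⟨w, hwz⟩

theorem complete_SCCRich_general (att : A → A → Prop) (h1 : oneSCC att) (a : A) :
    ∃ E, completeExt att E ∧ ¬ attacks att E a := by
  by_cases hnone : ∀ b c, ¬ att b c
  · exact ⟨Set.univ, completeExt_univ_of_forall_not_att hnone, fun ⟨b, _, hba⟩ => hnone b a hba⟩
  · obtain ⟨x, y, hxy⟩ : ∃ x y, att x y := by simpa using hnone
    exact ⟨∅, completeExt_empty_of_forall_exists_att (h1.exists_att_of_att hxy),
      not_attacks_empty att a⟩

theorem complete_SCCRich [Fintype A] (att : A → A → Prop) (h1 : oneSCC att) (a : A) :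
    ∃ E, completeExt att E ∧ ¬ attacks att E a :=
  complete_SCCRich_general att h1 a
end

section
/- Naive semantics satisfies INRA: for every AF F = ⟨Ar, att⟩ and every argument a ∈ Ar, if every naive extension of F attacks a, then the naive extensions of F equal the naive extensions of F restricted to Ar \ {a}. -/
variable {A : Type*}

/-- `S` is a naive extension of the AF restricted to the set `Ar` of arguments:
a ⊆-maximal conflict-free subset of `Ar`.  (Conflict-freeness and maximality in
the induced subframework on `Ar` only involve attacks among members of `Ar`,
so the global attack relation can be used.) -/
def naiveExtIn (Ar : Set A) (att : A → A → Prop) (S : Set A) : Prop :=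
  S ⊆ Ar ∧ conflictFree att S ∧ ∀ T, T ⊆ Ar → conflictFree att T → S ⊆ T → T = S

/-! Naive extensions of `Ar` exist above every conflict-free subset of `Ar` (Zorn: conflict-freeness
is preserved by unions of chains). So if every naive extension of `Ar` lies in `B ⊆ Ar`, the
conflict-free subsets of `Ar` are exactly those of `B`, and the two maximality conditions agree.
Every naive extension attacking `a` is conflict-free, hence misses `a`: take `B = Ar \ {a}`. -/

section

variable {att : A → A → Prop}

theorem conflictFree.notMem_of_attacks {S : Set A} {a : A} (hS : conflictFree att S)
    (ha : attacks att S a) : a ∉ S := by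
  obtain ⟨b, hb, hba⟩ := ha
  exact fun haS => hS b hb a haS hba

theorem conflictFree_sUnion_of_isChain {c : Set (Set A)} (hc : IsChain (· ⊆ ·) c)
    (hcf : ∀ s ∈ c, conflictFree att s) : conflictFree att (⋃₀ c) := by
  rintro b ⟨s, hs, hbs⟩ d ⟨t, ht, hdt⟩
  rcases hc.total hs ht with hst | hts
  · exact hcf t ht b (hst hbs) d hdt
  · exact hcf s hs b hbs d (hts hdt)

theorem exists_naiveExtIn_superset {Ar T : Set A} (hTAr : T ⊆ Ar) (hT : conflictFree att T) :
    ∃ M, T ⊆ M ∧ naiveExtIn Ar att M := by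
  obtain ⟨M, hTM, ⟨hMAr, hMcf⟩, hmax⟩ :=
    zorn_subset_nonempty {U | U ⊆ Ar ∧ conflictFree att U}
      (fun c hcS hc _ => ⟨⋃₀ c, ⟨Set.sUnion_subset fun s hs => (hcS hs).1,
        conflictFree_sUnion_of_isChain hc fun s hs => (hcS hs).2⟩,
        fun _ => Set.subset_sUnion_of_mem⟩) T ⟨hTAr, hT⟩
  exact ⟨M, hTM, hMAr, hMcf, fun U hUAr hUcf hMU => (hmax ⟨hUAr, hUcf⟩ hMU).antisymm hMU⟩

theorem naiveExtIn_iff_of_forall_subset {Ar B S : Set A} (hBAr : B ⊆ Ar)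
    (hB : ∀ M, naiveExtIn Ar att M → M ⊆ B) : naiveExtIn Ar att S ↔ naiveExtIn B att S := by
  constructor
  · intro hS
    exact ⟨hB S hS, hS.2.1, fun T hTB => hS.2.2 T (hTB.trans hBAr)⟩
  · rintro ⟨hSB, hcf, hmax⟩
    refine ⟨hSB.trans hBAr, hcf, fun T hTAr hTcf hST => hmax T ?_ hTcf hST⟩
    obtain ⟨M, hTM, hM⟩ := exists_naiveExtIn_superset hTAr hTcf
    exact hTM.trans (hB M hM)

end

theorem naive_INRA_general (att : A → A → Prop) (a : A)
    (h : ∀ S, naiveExtIn Set.univ att S → attacks att S a) :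
    {S | naiveExtIn Set.univ att S} = {S | naiveExtIn {x | x ≠ a} att S} := by
  have hmiss : ∀ M, naiveExtIn Set.univ att M → M ⊆ {x | x ≠ a} := fun M hM x hx hxa =>
    hM.2.1.notMem_of_attacks (h M hM) (hxa ▸ hx)
  ext S
  exact naiveExtIn_iff_of_forall_subset (Set.subset_univ _) hmiss

theorem naive_INRA [Fintype A] (att : A → A → Prop) (a : A)
    (h : ∀ S, naiveExtIn Set.univ att S → attacks att S a) :
    {S | naiveExtIn Set.univ att S} = {S | naiveExtIn {x | x ≠ a} att S} :=
  naive_INRA_general att a h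
end

section
/- Every AF has at least one SCOOC-naive extension, i.e., the collection of conflict-free sets that are strongly complete outside odd cycles has a ⊆-maximal element (in particular, the collection is nonempty). -/
variable {A : Type*}

def inOddCycle (att : A → A → Prop) (x : A) : Prop :=
  ∃ n : ℕ, Odd n ∧ ∃ p : ℕ → A, p 0 = x ∧ p n = x ∧
    (∀ i, i < n → att (p i) (p (i + 1))) ∧
    (∀ i j, i < j → j ≤ n → p i = p j → i = 0 ∧ j = n)

/-- `S` is strongly complete outside odd cycles. -/
def scooc (att : A → A → Prop) (S : Set A) : Prop :=
  ∀ x, ¬ inOddCycle att x → (∀ y, att y x → ¬ inOddCycle att y) →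
    (∀ b ∈ S, ¬ att b x) → x ∈ S

/-- `S` is a SCOOC-naive extension: ⊆-maximal among conflict-free sets that are
strongly complete outside odd cycles. -/
def sccoocNaiveExt (att : A → A → Prop) (S : Set A) : Prop :=
  conflictFree att S ∧ scooc att S ∧
    ∀ T, conflictFree att T → scooc att T → S ⊆ T → T = S

/-!
The arguments that neither lie on an odd cycle nor are attacked from one span a subgraph
without odd closed walks, since a shortest odd closed walk is an odd cycle. By Richardson's
theorem this subgraph has a kernel: a conflict-free set attacking every other argument of the
subgraph. Such a set is strongly complete outside odd cycles, so the finite family of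
conflict-free, strongly-complete-outside-odd-cycles sets is nonempty and has a maximal member.
-/

section Walks

variable {att : A → A → Prop} {V W : Set A}

def IsWalkIn (att : A → A → Prop) (V : Set A) (p : ℕ → A) (n : ℕ) : Prop :=
  (∀ i ≤ n, p i ∈ V) ∧ ∀ i < n, att (p i) (p (i + 1))

def WalkIn (att : A → A → Prop) (V : Set A) (n : ℕ) (a b : A) : Prop :=
  ∃ p, IsWalkIn att V p n ∧ p 0 = a ∧ p n = b

def ReachIn (att : A → A → Prop) (V : Set A) (a b : A) : Prop :=
  ∃ n, WalkIn att V n a b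

lemma IsWalkIn.walkIn_segment {p : ℕ → A} {n i j : ℕ} (hp : IsWalkIn att V p n)
    (hij : i ≤ j) (hjn : j ≤ n) : WalkIn att V (j - i) (p i) (p j) := by
  refine ⟨fun t => p (i + t), ⟨fun t ht => hp.1 _ (by omega), fun t ht => ?_⟩, rfl, ?_⟩
  · simpa only [← add_assoc] using hp.2 (i + t) (by omega)
  · simp only [Nat.add_sub_cancel' hij]

namespace WalkIn

lemma mono (hVW : V ⊆ W) {n : ℕ} {a b : A} (h : WalkIn att V n a b) : WalkIn att W n a b :=
  let ⟨p, hp, hp0, hpn⟩ := h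
  ⟨p, ⟨fun i hi => hVW (hp.1 i hi), hp.2⟩, hp0, hpn⟩

lemma refl {a : A} (ha : a ∈ V) : WalkIn att V 0 a a :=
  ⟨fun _ => a, ⟨fun _ _ => ha, fun _ hi => absurd hi (Nat.not_lt_zero _)⟩, rfl, rfl⟩

lemma eq_of_zero {a b : A} (h : WalkIn att V 0 a b) : a = b :=
  let ⟨_, _, hp0, hpn⟩ := h
  hp0.symm.trans hpn

lemma left_mem {n : ℕ} {a b : A} (h : WalkIn att V n a b) : a ∈ V :=
  let ⟨_, hp, hp0, _⟩ := h
  hp0 ▸ hp.1 0 n.zero_le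

lemma trans {m k : ℕ} {a b c : A} (hab : WalkIn att V m a b) (hbc : WalkIn att V k b c) :
    WalkIn att V (m + k) a c := by
  obtain ⟨p, hp, hp0, hpm⟩ := hab
  obtain ⟨q, hq, hq0, hqk⟩ := hbc
  have hpq : p m = q 0 := hpm.trans hq0.symm
  refine ⟨fun i => if i ≤ m then p i else q (i - m), ⟨fun i hi => ?_, fun i hi => ?_⟩, ?_, ?_⟩
  · dsimp only
    split_ifs with h
    · exact hp.1 i h
    · exact hq.1 (i - m) (by omega)
  · by_cases h : i + 1 ≤ m
    · simpa [h, show i ≤ m by omega] using hp.2 i h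
    by_cases h' : i = m
    · subst h'
      simpa [h, hpq] using hq.2 0 (by omega)
    · simpa [h, show ¬ i ≤ m by omega, show i + 1 - m = i - m + 1 by omega]
        using hq.2 (i - m) (by omega)
  · simpa using hp0
  · rcases Nat.eq_zero_or_pos k with rfl | hk
    · simpa [hpq] using hqk
    · simpa [show ¬ m + k ≤ m by omega] using hqk

lemma single {a b : A} (ha : a ∈ V) (hb : b ∈ V) (hab : att a b) : WalkIn att V 1 a b := by
  refine ⟨fun i => if i = 0 then a else b, ⟨fun i _ => ?_, fun i hi => ?_⟩, rfl, rfl⟩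
  · dsimp only
    split_ifs <;> assumption
  · simpa [Nat.lt_one_iff.mp hi] using hab

lemma cons {n : ℕ} {a b c : A} (ha : a ∈ V) (hab : att a b) (hbc : WalkIn att V n b c) :
    WalkIn att V (n + 1) a c :=
  add_comm 1 n ▸ (single ha hbc.left_mem hab).trans hbc

lemma exists_last {n : ℕ} {a b : A} (h : WalkIn att V (n + 1) a b) :
    ∃ u ∈ V, att u b := by
  obtain ⟨p, hp, -, rfl⟩ := h
  exact ⟨p n, hp.1 n n.le_succ, hp.2 n n.lt_succ_self⟩

end WalkIn

lemma ReachIn.refl {a : A} (ha : a ∈ V) : ReachIn att V a a :=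
  ⟨0, WalkIn.refl ha⟩

lemma ReachIn.trans {a b c : A} (hab : ReachIn att V a b) (hbc : ReachIn att V b c) :
    ReachIn att V a c :=
  let ⟨_, hab⟩ := hab
  let ⟨_, hbc⟩ := hbc
  ⟨_, hab.trans hbc⟩

/-- A repeated vertex splits an odd closed walk into two shorter closed walks, one of them
odd; a closed walk without repetitions is a cycle. -/
theorem not_walkIn_self_of_odd (hV : ∀ x ∈ V, ¬ inOddCycle att x) {n : ℕ} (hn : Odd n)
    (a : A) : ¬ WalkIn att V n a a := by
  induction n using Nat.strong_induction_on generalizing a with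
  | _ n ih =>
  rintro ⟨p, hp, rfl, hpn⟩
  by_cases hsimple : ∀ i j, i < j → j ≤ n → p i = p j → i = 0 ∧ j = n
  · exact hV _ (hp.1 0 n.zero_le) ⟨n, hn, p, rfl, hpn, hp.2, hsimple⟩
  push Not at hsimple
  obtain ⟨i, j, hij, hjn, hpij, hij_ne⟩ := hsimple
  have inner : WalkIn att V (j - i) (p i) (p i) := hpij ▸ hp.walkIn_segment hij.le hjn
  have outer : WalkIn att V (i + (n - j)) (p 0) (p 0) := by
    have hpre := hp.walkIn_segment (Nat.zero_le i) (hij.le.trans hjn)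
    have hsuf := hp.walkIn_segment hjn le_rfl
    rw [hpij, Nat.sub_zero] at hpre
    rw [hpn] at hsuf
    exact hpre.trans hsuf
  rw [show n = (j - i) + (i + (n - j)) by omega] at hn
  rcases Nat.even_or_odd (j - i) with heven | hodd
  · exact ih _ (by omega) ((Nat.odd_add'.mp hn).mpr heven) _ outer
  · exact ih _ (by omega) hodd _ inner

end Walks

section Kernels

variable {att : A → A → Prop} {V : Set A}

def IsKernel (att : A → A → Prop) (V S : Set A) : Prop :=
  S ⊆ V ∧ conflictFree att S ∧ ∀ w ∈ V, w ∉ S → ∃ s ∈ S, att s w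

lemma exists_forall_reachIn_symm [Finite A] (hne : V.Nonempty) :
    ∃ v ∈ V, ∀ w, ReachIn att V w v → ReachIn att V v w := by
  obtain ⟨v, hvV, hmin⟩ :=
    (Set.toFinite V).exists_minimalFor (fun v => {w | ReachIn att V w v}) V hne
  refine ⟨v, hvV, fun w hwv => ?_⟩
  have hsub : {u | ReachIn att V u w} ⊆ {u | ReachIn att V u v} := fun u huw => huw.trans hwv
  exact hmin hwv.choose_spec.left_mem hsub (ReachIn.refl hvV)

/-- Inside a strongly connected part, "having an even walk to `v`" is a consistent
2-colouring as soon as there are no odd closed walks. -/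
theorem isKernel_setOf_even_walkIn (hV : ∀ n a, Odd n → ¬ WalkIn att V n a a) {v : A}
    (hv : ∀ w, ReachIn att V w v → ReachIn att V v w) :
    IsKernel att {w | ReachIn att V w v} {w | ∃ n, Even n ∧ WalkIn att V n w v} := by
  have hclosed_even : ∀ {n a}, WalkIn att V n a a → Even n := fun h =>
    Nat.not_odd_iff_even.mp fun hn => hV _ _ hn h
  refine ⟨fun w ⟨n, _, hw⟩ => ⟨n, hw⟩, ?_, ?_⟩
  · rintro s ⟨m, hm, hsv⟩ t ⟨k, hk, htv⟩ hst
    obtain ⟨l, hvs⟩ := hv s ⟨m, hsv⟩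
    have h1 := hclosed_even (hvs.trans hsv)
    have h2 := hclosed_even (hvs.trans (htv.cons hsv.left_mem hst))
    rw [Nat.even_iff] at hm hk h1 h2
    omega
  · rintro w ⟨m, hwv⟩ hw
    have hm : Odd m := Nat.not_even_iff_odd.mp fun he => hw ⟨m, he, hwv⟩
    obtain ⟨r, hvw⟩ := hv w ⟨m, hwv⟩
    cases r with
    | zero => exact absurd (hclosed_even (hvw.eq_of_zero ▸ hwv)) (Nat.not_even_iff_odd.mpr hm)
    | succ r =>
      obtain ⟨u, huV, huw⟩ := hvw.exists_last
      have huv := hwv.cons huV huw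
      exact ⟨u, ⟨m + 1, hm.add_one, huv⟩, huw⟩

theorem IsKernel.union {C S S' : Set A} (hCV : C ⊆ V) (hC : ∀ u ∈ V, ∀ w ∈ C, att u w → u ∈ C)
    (hS : IsKernel att C S) (hS' : IsKernel att (V \ (C ∪ {w | ∃ s ∈ S, att s w})) S') :
    IsKernel att V (S ∪ S') := by
  obtain ⟨hSC, hScf, hSabs⟩ := hS
  obtain ⟨hS'V, hS'cf, hS'abs⟩ := hS'
  refine ⟨Set.union_subset (hSC.trans hCV) fun a ha => (hS'V ha).1, ?_, ?_⟩
  · rintro a (ha | ha) b (hb | hb) hab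
    · exact hScf a ha b hb hab
    · exact (hS'V hb).2 (Or.inr ⟨a, ha, hab⟩)
    · exact (hS'V ha).2 (Or.inl (hC a (hS'V ha).1 b (hSC hb) hab))
    · exact hS'cf a ha b hb hab
  · intro w hwV hw
    rw [Set.mem_union, not_or] at hw
    by_cases hwC : w ∈ C
    · obtain ⟨s, hs, hsw⟩ := hSabs w hwC hw.1
      exact ⟨s, Or.inl hs, hsw⟩
    by_cases hwS : ∃ s ∈ S, att s w
    · obtain ⟨s, hs, hsw⟩ := hwS
      exact ⟨s, Or.inl hs, hsw⟩
    · obtain ⟨s, hs, hsw⟩ := hS'abs w ⟨hwV, fun h => h.elim hwC hwS⟩ hw.2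
      exact ⟨s, Or.inr hs, hsw⟩

/-- Richardson's theorem: peel off an initial strongly connected part, take its even-parity
kernel, discard what that kernel attacks, and recurse. -/
theorem exists_isKernel [Finite A] (V : Set A) (hV : ∀ n a, Odd n → ¬ WalkIn att V n a a) :
    ∃ S, IsKernel att V S := by
  induction V using WellFoundedLT.induction with
  | _ V ih =>
  rcases V.eq_empty_or_nonempty with rfl | hne
  · exact ⟨∅, subset_rfl, fun _ h => h.elim, fun _ h => h.elim⟩
  obtain ⟨v, hvV, hv⟩ := exists_forall_reachIn_symm (att := att) hne
  set C := {w | ReachIn att V w v}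
  set S := {w | ∃ n, Even n ∧ WalkIn att V n w v}
  set V' := V \ (C ∪ {w | ∃ s ∈ S, att s w})
  have hCV : C ⊆ V := fun w ⟨_, hw⟩ => hw.left_mem
  have hC : ∀ u ∈ V, ∀ w ∈ C, att u w → u ∈ C := fun u hu w ⟨n, hw⟩ huw => ⟨_, hw.cons hu huw⟩
  have hV'V : V' ⊆ V := Set.sdiff_subset
  have hV'lt : V' < V :=
    (Set.ssubset_iff_of_subset hV'V).mpr ⟨v, hvV, fun h => h.2 (Or.inl (ReachIn.refl hvV))⟩
  obtain ⟨S', hS'⟩ := ih V' hV'lt fun n a hn h => hV n a hn (h.mono hV'V)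
  exact ⟨S ∪ S', (isKernel_setOf_even_walkIn hV hv).union hCV hC hS'⟩

end Kernels

theorem sccoocNaive_exists [Fintype A] (att : A → A → Prop) :
    ∃ E, sccoocNaiveExt att E := by
  set V := {x | ¬ inOddCycle att x ∧ ∀ y, att y x → ¬ inOddCycle att y}
  obtain ⟨S, -, hScf, hSabs⟩ :=
    exists_isKernel (att := att) V fun _ _ hn => not_walkIn_self_of_odd (fun _ hx => hx.1) hn _
  have hS : scooc att S := fun x hx hatt hfree => by
    by_contra hxS
    obtain ⟨s, hs, hsx⟩ := hSabs x ⟨hx, hatt⟩ hxS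
    exact hfree s hs hsx
  obtain ⟨E, hE, hmax⟩ := Set.Finite.exists_maximalFor id
    {S : Set A | conflictFree att S ∧ scooc att S} (Set.toFinite _) ⟨S, hScf, hS⟩
  exact ⟨E, hE.1, hE.2, fun T hT hT' hET => (hmax (j := T) ⟨hT, hT'⟩ hET).antisymm hET⟩
end
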